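/- Let p and q be distinct primes and set F(t) = Φ_{pq}(t)·Φ_{p²q}(t)·Φ_{pq²}(t) and G(t) = Φ_{p²q²}(t)·Φ_{pq}(t)·Φ_{pq}(t) in ℤ[t]. Then |R(F(t), tⁿ−1)| = |R(G(t), tⁿ−1)| for every n ≥ 1. -/

import Mathlib

open Polynomial

set_option synthInstance.maxHeartbeats 1000000
set_option maxHeartbeats 1000000

noncomputable section

/-- The Sylvester matrix of two polynomials `f, g ∈ ℤ[t]` of degrees `d, e`: the
`(d+e) × (d+e)` matrix whose first `e` rows are the shifted coefficient sequences
`a₀ a₁ ⋯ a_d` of `f` (with `a_k` the coefficient of `t^{d-k}`) and whose last `d` rows are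
the shifted coefficient sequences `b₀ b₁ ⋯ b_e` of `g`. -/
def sylvesterMatrix (f g : Polynomial ℤ) :
    Matrix (Fin (f.natDegree + g.natDegree)) (Fin (f.natDegree + g.natDegree)) ℤ :=
  fun i j =>
    if (i : ℕ) < g.natDegree then
      (if (i : ℕ) ≤ (j : ℕ) ∧ (j : ℕ) ≤ (i : ℕ) + f.natDegree
        then f.coeff (f.natDegree - ((j : ℕ) - (i : ℕ))) else 0)
    else
      (if ((i : ℕ) - g.natDegree) ≤ (j : ℕ) ∧ (j : ℕ) ≤ ((i : ℕ) - g.natDegree) + g.natDegree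
        then g.coeff (g.natDegree - ((j : ℕ) - ((i : ℕ) - g.natDegree))) else 0)

/-- The resultant `R(f,g)` of two polynomials `f, g ∈ ℤ[t]`, the determinant of their
Sylvester matrix. -/
def resultant (f g : Polynomial ℤ) : ℤ :=
  (sylvesterMatrix f g).det

/-- A polynomial `f(t) = Σ_{i=0}^d a_i t^{d-i}` of degree `d` is reciprocal if
`a_i = a_{d-i}` for every `i`. -/
def IsReciprocal (f : Polynomial ℤ) : Prop :=
  ∀ i ≤ f.natDegree, f.coeff i = f.coeff (f.natDegree - i)

/-! The Sylvester matrix above is Mathlib's `Polynomial.sylvester` transposed and reversed in both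
indices, so `resultant` agrees with `Polynomial.resultant`. Factoring `tⁿ - 1 = ∏_{ζⁿ = 1} (t - ζ)`
over `ℂ` then gives `|R(f, tⁿ - 1)| = |∏_{ζⁿ = 1} f(ζ)|`. With `Φ = Φ_{pq}` we have
`Φ_{p²q}(x) = Φ(xᵖ)`, `Φ_{pq²}(x) = Φ(x^q)` and `Φ_{p²q²}(x) = Φ(x^{pq})`. If `pq ∣ n`, both
products vanish at a primitive `pq`-th root of unity. Otherwise one of the primes, say `p`, is
prime to `n`, so `ζ ↦ ζᵖ` permutes the `n`-th roots of unity: it turns `∏ Φ(ζᵖ)` into `∏ Φ(ζ)`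
and `∏ Φ(ζ^{pq})` into `∏ Φ(ζ^q)`, and both products become `(∏ Φ(ζ))² ∏ Φ(ζ^q)`. -/

open Matrix Finset

theorem sylvesterMatrix_eq_transpose_sylvester (f g : ℤ[X]) :
    sylvesterMatrix f g =
      ((sylvester f g f.natDegree g.natDegree).submatrix Fin.rev Fin.rev)ᵀ := by
  ext i j
  have := i.isLt
  simp only [sylvesterMatrix, sylvester, transpose_apply, submatrix_apply, of_apply, Fin.addCases,
    Set.mem_Icc, Fin.val_rev, Fin.val_castLT, Fin.val_subNat, Fin.val_cast, eq_rec_constant]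
  split_ifs <;> first | rfl | omega | (congr 1; omega)

theorem resultant_eq_polynomial_resultant (f g : ℤ[X]) :
    _root_.resultant f g = f.resultant g := by
  rw [_root_.resultant, sylvesterMatrix_eq_transpose_sylvester, det_transpose]
  exact det_submatrix_equiv_self Fin.revPerm _

theorem pow_eq_self_of_modEq_one {M : Type*} [Monoid M] {x : M} {n k : ℕ} (hx : x ^ n = 1)
    (hk : k ≡ 1 [MOD n]) : x ^ k = x := by
  rw [← pow_mod_orderOf, hk.of_dvd (orderOf_dvd_of_pow_eq_one hx), pow_mod_orderOf, pow_one]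

theorem eval_cyclotomic_mul_prime {R : Type*} [CommRing R] {p m : ℕ} (hp : p.Prime) (hpm : p ∣ m)
    (x : R) : (cyclotomic (m * p) R).eval x = (cyclotomic m R).eval (x ^ p) := by
  rw [← cyclotomic_expand_eq_cyclotomic hp hpm, expand_eval]

section RootsOfUnity

variable {R : Type*} [CommRing R] [IsDomain R] {n : ℕ}

theorem pow_mem_nthRootsFinset_one {x : R} (hx : x ∈ nthRootsFinset n (1 : R)) (k : ℕ) :
    x ^ k ∈ nthRootsFinset n (1 : R) := by
  simpa using map_mem_nthRootsFinset hx (powMonoidHom k)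

theorem prod_nthRootsFinset_comp_pow_of_coprime {M : Type*} [CommMonoid M] (h : R → M) {r : ℕ}
    (hr : r.Coprime n) :
    ∏ x ∈ nthRootsFinset n (1 : R), h (x ^ r) = ∏ x ∈ nthRootsFinset n (1 : R), h x := by
  rcases n.eq_zero_or_pos with rfl | hn
  · simp
  -- `x ↦ x ^ r` is inverted by `x ↦ x ^ s` with `r * s ≡ 1 [MOD n]`, by Euler's theorem.
  set s := r ^ (n.totient - 1)
  have hrs : r * s ≡ 1 [MOD n] := by
    rw [← pow_succ', Nat.sub_add_cancel (Nat.totient_pos.2 hn)]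
    exact Nat.ModEq.pow_totient hr
  have pow_rs : ∀ x ∈ nthRootsFinset n (1 : R), x ^ (r * s) = x := fun x hx =>
    pow_eq_self_of_modEq_one ((mem_nthRootsFinset hn 1).1 hx) hrs
  refine prod_nbij' (· ^ r) (· ^ s) (fun x hx => pow_mem_nthRootsFinset_one hx r)
    (fun x hx => pow_mem_nthRootsFinset_one hx s) (fun x hx => ?_) (fun x hx => ?_) fun _ _ => rfl
  · rw [← pow_mul, pow_rs x hx]
  · rw [← pow_mul, mul_comm, pow_rs x hx]

variable {ζ : R}

theorem resultant_X_pow_sub_one_eq_prod (hζ : IsPrimitiveRoot ζ n) (hn : 0 < n) (f : R[X]) :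
    f.resultant (X ^ n - 1) = ∏ x ∈ nthRootsFinset n (1 : R), (-1) ^ f.natDegree * f.eval x := by
  rw [X_pow_sub_one_eq_prod hn hζ, resultant_prod_right _ _ _ _ le_rfl (by simp)]
  refine prod_congr rfl fun x _ => ?_
  rw [natDegree_X_sub_C, resultant_X_sub_C_right _ _ _ le_rfl]

theorem prod_nthRootsFinset_eval_cyclotomic_eq_zero (hζ : IsPrimitiveRoot ζ n) (hn : 0 < n)
    {m : ℕ} (hm : m ∣ n) : ∏ x ∈ nthRootsFinset n (1 : R), (cyclotomic m R).eval x = 0 := by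
  obtain ⟨k, rfl⟩ := hm
  have hprim : IsPrimitiveRoot (ζ ^ k) m := hζ.pow hn (mul_comm m k)
  refine prod_eq_zero ((mem_nthRootsFinset hn 1).2 ?_)
    (hprim.isRoot_cyclotomic (pos_of_mul_pos_left hn k.zero_le))
  rw [pow_mul, hprim.pow_eq_one, one_pow]

end RootsOfUnity

theorem natAbs_resultant_X_pow_sub_one {n : ℕ} (hn : 0 < n) (f : ℤ[X]) :
    ((f.resultant (X ^ n - 1)).natAbs : ℝ) =
      ‖∏ x ∈ nthRootsFinset n (1 : ℂ), (f.map (Int.castRingHom ℂ)).eval x‖ := by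
  have hcast : ((f.resultant (X ^ n - 1) : ℤ) : ℂ) =
      (f.map (Int.castRingHom ℂ)).resultant (X ^ n - 1) := by
    have hinj : Function.Injective (Int.castRingHom ℂ) := Int.cast_injective
    have hX : (X ^ n - 1 : ℤ[X]).map (Int.castRingHom ℂ) = X ^ n - 1 := by simp
    rw [← eq_intCast (Int.castRingHom ℂ), ← resultant_map_map,
      natDegree_map_eq_of_injective hinj, ← natDegree_map_eq_of_injective hinj (X ^ n - 1), hX]
  rw [Nat.cast_natAbs, Int.cast_abs, ← Complex.norm_intCast, hcast,
    resultant_X_pow_sub_one_eq_prod (Complex.isPrimitiveRoot_exp n hn.ne') hn, prod_mul_distrib,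
    norm_mul, norm_prod, norm_prod]
  simp

theorem prod_eval_fried_pair {R : Type*} [CommRing R] [IsDomain R] {n : ℕ} {ζ : R}
    (hζ : IsPrimitiveRoot ζ n) (hn : 0 < n) {p q : ℕ} (hp : p.Prime) (hq : q.Prime)
    (hpq : p ≠ q) :
    ∏ x ∈ nthRootsFinset n (1 : R),
        (cyclotomic (p * q) R * cyclotomic (p ^ 2 * q) R * cyclotomic (p * q ^ 2) R).eval x =
      ∏ x ∈ nthRootsFinset n (1 : R),
        (cyclotomic (p ^ 2 * q ^ 2) R * cyclotomic (p * q) R * cyclotomic (p * q) R).eval x := by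
  set Φ : R → R := fun x => (cyclotomic (p * q) R).eval x
  have hΦp : ∀ x, (cyclotomic (p ^ 2 * q) R).eval x = Φ (x ^ p) := fun x => by
    rw [show p ^ 2 * q = p * q * p by ring, eval_cyclotomic_mul_prime hp (dvd_mul_right p q)]
  have hΦq : ∀ x, (cyclotomic (p * q ^ 2) R).eval x = Φ (x ^ q) := fun x => by
    rw [show p * q ^ 2 = p * q * q by ring, eval_cyclotomic_mul_prime hq (dvd_mul_left q p)]
  have hΦpq : ∀ x, (cyclotomic (p ^ 2 * q ^ 2) R).eval x = Φ ((x ^ p) ^ q) := fun x => by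
    rw [show p ^ 2 * q ^ 2 = p * q ^ 2 * p by ring,
      eval_cyclotomic_mul_prime hp (dvd_mul_of_dvd_left (dvd_refl p) _), hΦq]
  simp only [eval_mul, hΦp, hΦq, hΦpq, prod_mul_distrib]
  by_cases hdvd : p * q ∣ n
  · simp only [Φ, prod_nthRootsFinset_eval_cyclotomic_eq_zero hζ hn hdvd, zero_mul, mul_zero]
  rcases Nat.coprime_or_dvd_of_prime hp n with hpn | hpn
  · rw [prod_nthRootsFinset_comp_pow_of_coprime Φ hpn,
      prod_nthRootsFinset_comp_pow_of_coprime (fun y => Φ (y ^ q)) hpn]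
    ring
  rcases Nat.coprime_or_dvd_of_prime hq n with hqn | hqn
  · simp_rw [pow_right_comm _ p q]
    rw [prod_nthRootsFinset_comp_pow_of_coprime Φ hqn,
      prod_nthRootsFinset_comp_pow_of_coprime (fun y => Φ (y ^ p)) hqn]
    ring
  exact absurd (((Nat.coprime_primes hp hq).2 hpq).mul_dvd_of_dvd_of_dvd hpn hqn) hdvd

/-- For distinct primes `p, q`, Fried's pair
`F(t) = Φ_{pq}(t)Φ_{p²q}(t)Φ_{pq²}(t)` and `G(t) = Φ_{p²q²}(t)Φ_{pq}(t)Φ_{pq}(t)`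
have the same cyclic resultants in absolute value: `|R(F, tⁿ-1)| = |R(G, tⁿ-1)|`
for every `n ≥ 1`. -/
theorem fried_pair_same_cyclic_resultants
    (p q : ℕ) (hp : p.Prime) (hq : q.Prime) (hpq : p ≠ q)
    (F G : Polynomial ℤ)
    (hF : F = cyclotomic (p * q) ℤ * cyclotomic (p ^ 2 * q) ℤ * cyclotomic (p * q ^ 2) ℤ)
    (hG : G = cyclotomic (p ^ 2 * q ^ 2) ℤ * cyclotomic (p * q) ℤ * cyclotomic (p * q) ℤ)
    (n : ℕ) (hn : 1 ≤ n) :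
    (_root_.resultant F ((X : Polynomial ℤ) ^ n - 1)).natAbs
      = (_root_.resultant G ((X : Polynomial ℤ) ^ n - 1)).natAbs := by
  rw [resultant_eq_polynomial_resultant, resultant_eq_polynomial_resultant,
    ← Nat.cast_inj (R := ℝ), natAbs_resultant_X_pow_sub_one hn, natAbs_resultant_X_pow_sub_one hn,
    hF, hG]
  simp only [Polynomial.map_mul, map_cyclotomic]
  rw [prod_eval_fried_pair (Complex.isPrimitiveRoot_exp n (by omega)) hn hp hq hpq]

end
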